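/- arXiv:2001.05754 — 3 statements merged into one kernel-verified Lean document; each statement's English description precedes it below -/
import Mathlib

section
/- Let s > 3, k ≥ 1, β ∈ C([0,τ)) and let v solve v_t - v_{xxt} + (k+2)β^k v^k v_x = (k+1)β^k v^{k-1} v_x v_{xx} + β^k v^k v_{xxx} on the torus with V = v - v_{xx}. Let q(t,x) solve the flow ODE dq/dt = β^k(t) v^k(t, q), q(0,x) = x. Then V(t, q(t,x)) q_x(t,x)^{(k+1)/k} = V(0, x) for all t ∈ [0,τ) and x ∈ T. In particular, since q_x > 0, the sign of V along the flow is preserved: sign V(t, q(t,x)) = sign V(0,x). -/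
open Real

/-- Spatial derivative of a time-dependent function. -/
noncomputable def dX (v : ℝ → ℝ → ℝ) : ℝ → ℝ → ℝ := fun t x => deriv (fun y => v t y) x

/-- Time derivative of a time-dependent function. -/
noncomputable def dT (v : ℝ → ℝ → ℝ) : ℝ → ℝ → ℝ := fun t x => deriv (fun τ => v τ x) t

namespace VAF

/-- Directional partial derivative of a function on the plane. -/
noncomputable def pd (c : ℝ × ℝ) (F : ℝ × ℝ → ℝ) : ℝ × ℝ → ℝ := fun p => fderiv ℝ F p c

lemma hasDerivAt_slice_t {F : ℝ × ℝ → ℝ} {t x : ℝ} (hF : DifferentiableAt ℝ F (t, x)) :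
    HasDerivAt (fun s => F (s, x)) (pd (1, 0) F (t, x)) t := by
  have h1 : HasDerivAt (fun s : ℝ => (s, x)) ((1:ℝ), (0:ℝ)) t :=
    (hasDerivAt_id t).prodMk (hasDerivAt_const t x)
  exact hF.hasFDerivAt.comp_hasDerivAt t h1

lemma hasDerivAt_slice_x {F : ℝ × ℝ → ℝ} {t x : ℝ} (hF : DifferentiableAt ℝ F (t, x)) :
    HasDerivAt (fun y => F (t, y)) (pd (0, 1) F (t, x)) x := by
  have h1 : HasDerivAt (fun y : ℝ => (t, y)) ((0:ℝ), (1:ℝ)) x :=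
    (hasDerivAt_const x t).prodMk (hasDerivAt_id x)
  exact hF.hasFDerivAt.comp_hasDerivAt x h1

lemma contDiff_pd {F : ℝ × ℝ → ℝ} (hF : ContDiff ℝ (⊤ : ℕ∞) F) (c : ℝ × ℝ) :
    ContDiff ℝ (⊤ : ℕ∞) (pd c F) :=
  (hF.fderiv_right (by simp)).clm_apply contDiff_const

lemma pd_comm {F : ℝ × ℝ → ℝ} (hF : ContDiff ℝ (⊤ : ℕ∞) F) (a b : ℝ × ℝ) (p : ℝ × ℝ) :
    pd a (pd b F) p = pd b (pd a F) p := by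
  have hd : ∀ y, HasFDerivAt F (fderiv ℝ F y) y := fun y =>
    ((hF.differentiable (by simp)) y).hasFDerivAt
  have hD : ContDiff ℝ (⊤ : ℕ∞) (fderiv ℝ F) := hF.fderiv_right (by simp)
  have h2 : HasFDerivAt (fderiv ℝ F) (fderiv ℝ (fderiv ℝ F) p) p :=
    ((hD.differentiable (by simp)) p).hasFDerivAt
  have symm := second_derivative_symmetric hd h2 a b
  have e : ∀ c w : ℝ × ℝ, pd w (pd c F) p = fderiv ℝ (fderiv ℝ F) p w c := by
    intro c w
    have hc : HasFDerivAt (pd c F)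
        ((ContinuousLinearMap.apply ℝ ℝ c).comp (fderiv ℝ (fderiv ℝ F) p)) p :=
      (ContinuousLinearMap.apply ℝ ℝ c).hasFDerivAt.comp p h2
    show fderiv ℝ (pd c F) p w = _
    rw [hc.fderiv]
    rfl
  rw [e b a, e a b, symm]

end VAF

theorem V_along_flow (k : ℕ) (hk : 1 ≤ k) (τ : ℝ) (hτ : 0 < τ)
    (β : ℝ → ℝ) (hβ : Continuous β)
    (v q : ℝ → ℝ → ℝ)
    (hv : ContDiff ℝ (⊤ : ℕ∞) (fun p : ℝ × ℝ => v p.1 p.2))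
    (hq : ContDiff ℝ (⊤ : ℕ∞) (fun p : ℝ × ℝ => q p.1 p.2))
    (hper : ∀ t x : ℝ, v t (x + 2 * π) = v t x)
    -- the generalized Camassa–Holm equation for `v`
    (hpde : ∀ t ∈ Set.Ico (0:ℝ) τ, ∀ x : ℝ,
      dT v t x - dT (dX (dX v)) t x
        + ((k : ℝ) + 2) * (β t) ^ k * (v t x) ^ k * dX v t x
      = ((k : ℝ) + 1) * (β t) ^ k * (v t x) ^ (k - 1) * dX v t x * dX (dX v) t x
        + (β t) ^ k * (v t x) ^ k * dX (dX (dX v)) t x)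
    -- the flow `q` of `β^k v^k`
    (hflow : ∀ t ∈ Set.Ico (0:ℝ) τ, ∀ x : ℝ,
      dT q t x = (β t) ^ k * (v t (q t x)) ^ k)
    (hq0 : ∀ x : ℝ, q 0 x = x) :
    ∀ t ∈ Set.Ico (0:ℝ) τ, ∀ x : ℝ,
      ((v t (q t x) - dX (dX v) t (q t x)) * (dX q t x) ^ (((k : ℝ) + 1)/(k : ℝ))
          = v 0 x - dX (dX v) 0 x) ∧
      (0 < dX q t x →
        Real.sign (v t (q t x) - dX (dX v) t (q t x)) =
          Real.sign (v 0 x - dX (dX v) 0 x)) := by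
  intro t ht x
  have hkR : (k:ℝ) ≠ 0 := Nat.cast_ne_zero.mpr (by omega)
  set α : ℝ := ((k:ℝ) + 1) / (k:ℝ) with hαdef
  set V0 : ℝ × ℝ → ℝ := fun p => v p.1 p.2 with hV0def
  set Q0 : ℝ × ℝ → ℝ := fun p => q p.1 p.2 with hQ0def
  set V1 : ℝ × ℝ → ℝ := VAF.pd (0, 1) V0 with hV1def
  set V2 : ℝ × ℝ → ℝ := VAF.pd (0, 1) V1 with hV2def
  set V3 : ℝ × ℝ → ℝ := VAF.pd (0, 1) V2 with hV3def
  set Q1 : ℝ × ℝ → ℝ := VAF.pd (0, 1) Q0 with hQ1def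
  set QT : ℝ × ℝ → ℝ := VAF.pd (1, 0) Q0 with hQTdef
  have cV0 : ContDiff ℝ (⊤ : ℕ∞) V0 := hv
  have cQ0 : ContDiff ℝ (⊤ : ℕ∞) Q0 := hq
  have cV1 : ContDiff ℝ (⊤ : ℕ∞) V1 := VAF.contDiff_pd cV0 _
  have cV2 : ContDiff ℝ (⊤ : ℕ∞) V2 := VAF.contDiff_pd cV1 _
  have cQ1 : ContDiff ℝ (⊤ : ℕ∞) Q1 := VAF.contDiff_pd cQ0 _
  have cQT : ContDiff ℝ (⊤ : ℕ∞) QT := VAF.contDiff_pd cQ0 _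
  have dV0 : Differentiable ℝ V0 := cV0.differentiable (by simp)
  have dV1 : Differentiable ℝ V1 := cV1.differentiable (by simp)
  have dV2 : Differentiable ℝ V2 := cV2.differentiable (by simp)
  have dQ0 : Differentiable ℝ Q0 := cQ0.differentiable (by simp)
  have dQ1 : Differentiable ℝ Q1 := cQ1.differentiable (by simp)
  have dQT : Differentiable ℝ QT := cQT.differentiable (by simp)
  -- identifications of dX / dT with partial derivatives
  have F1 : ∀ s y, dX v s y = V1 (s, y) := fun s y =>
    (VAF.hasDerivAt_slice_x (dV0 (s, y))).deriv
  have F2 : ∀ s y, dX (dX v) s y = V2 (s, y) := by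
    intro s y
    have h1 : (fun z => dX v s z) = fun z => V1 (s, z) := funext fun z => F1 s z
    show deriv (fun z => dX v s z) y = _
    rw [h1]
    exact (VAF.hasDerivAt_slice_x (dV1 (s, y))).deriv
  have F3 : ∀ s y, dX (dX (dX v)) s y = V3 (s, y) := by
    intro s y
    have h1 : (fun z => dX (dX v) s z) = fun z => V2 (s, z) := funext fun z => F2 s z
    show deriv (fun z => dX (dX v) s z) y = _
    rw [h1]
    exact (VAF.hasDerivAt_slice_x (dV2 (s, y))).deriv
  have F4 : ∀ s y, dT v s y = VAF.pd (1, 0) V0 (s, y) := fun s y =>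
    (VAF.hasDerivAt_slice_t (dV0 (s, y))).deriv
  have F5 : ∀ s y, dT (dX (dX v)) s y = VAF.pd (1, 0) V2 (s, y) := by
    intro s y
    have h1 : (fun u => dX (dX v) u y) = fun u => V2 (u, y) := funext fun u => F2 u y
    show deriv (fun u => dX (dX v) u y) s = _
    rw [h1]
    exact (VAF.hasDerivAt_slice_t (dV2 (s, y))).deriv
  have F6 : ∀ s y, dX q s y = Q1 (s, y) := fun s y =>
    (VAF.hasDerivAt_slice_x (dQ0 (s, y))).deriv
  have F7 : ∀ s y, dT q s y = QT (s, y) := fun s y =>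
    (VAF.hasDerivAt_slice_t (dQ0 (s, y))).deriv
  -- the flow equation in partial-derivative language
  have hflow' : ∀ s ∈ Set.Ico (0:ℝ) τ, ∀ y : ℝ,
      QT (s, y) = β s ^ k * (V0 (s, Q0 (s, y))) ^ k := by
    intro s hs y
    have := hflow s hs y
    rw [F7 s y] at this
    exact this
  -- the PDE in partial-derivative language
  have hpde' : ∀ s ∈ Set.Ico (0:ℝ) τ, ∀ y : ℝ,
      VAF.pd (1, 0) V0 (s, y) - VAF.pd (1, 0) V2 (s, y)
        + ((k : ℝ) + 2) * β s ^ k * (V0 (s, y)) ^ k * V1 (s, y)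
      = ((k : ℝ) + 1) * β s ^ k * (V0 (s, y)) ^ (k - 1) * V1 (s, y) * V2 (s, y)
        + β s ^ k * (V0 (s, y)) ^ k * V3 (s, y) := by
    intro s hs y
    have h := hpde s hs y
    rw [F1 s y, F2 s y, F3 s y, F4 s y, F5 s y] at h
    exact h
  -- the main objects, as functions of time (x is fixed)
  set g : ℝ → ℝ := fun s => Q1 (s, x) with hgdef
  set A : ℝ → ℝ := fun s =>
    (k : ℝ) * β s ^ k * (V0 (s, Q0 (s, x))) ^ (k - 1) * V1 (s, Q0 (s, x)) with hAdef
  set W : ℝ → ℝ := fun s => V0 (s, Q0 (s, x)) - V2 (s, Q0 (s, x)) with hWdef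
  -- initial values
  have hg0 : g 0 = 1 := by
    have h1 : (fun z => Q0 (0, z)) = fun z : ℝ => z := funext fun z => hq0 z
    have h2 := (VAF.hasDerivAt_slice_x (dQ0 (0, x))).deriv
    rw [h1] at h2
    show VAF.pd (0, 1) Q0 (0, x) = 1
    rw [← h2]
    simp
  have hW0 : W 0 = v 0 x - V2 (0, x) := by
    have h1 : Q0 (0, x) = x := hq0 x
    rw [hWdef]
    simp only [h1]
    rfl
  -- the ODE for g
  have hgode : ∀ s ∈ Set.Ico (0:ℝ) τ, HasDerivAt g (A s * g s) s := by
    intro s hs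
    have hqy : HasDerivAt (fun z => Q0 (s, z)) (g s) x := VAF.hasDerivAt_slice_x (dQ0 (s, x))
    have hvz : HasDerivAt (fun z => V0 (s, z)) (V1 (s, Q0 (s, x))) (Q0 (s, x)) :=
      VAF.hasDerivAt_slice_x (dV0 (s, Q0 (s, x)))
    have hcomp : HasDerivAt (fun z => V0 (s, Q0 (s, z))) (V1 (s, Q0 (s, x)) * g s) x :=
      hvz.comp x hqy
    have hpow : HasDerivAt (fun z => (V0 (s, Q0 (s, z))) ^ k)
        ((k : ℝ) * (V0 (s, Q0 (s, x))) ^ (k - 1) * (V1 (s, Q0 (s, x)) * g s)) x := hcomp.pow k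
    have hfull := hpow.const_mul (β s ^ k)
    have key : VAF.pd (1, 0) Q1 (s, x) = A s * g s := by
      calc VAF.pd (1, 0) Q1 (s, x) = VAF.pd (0, 1) QT (s, x) :=
            VAF.pd_comm cQ0 (1, 0) (0, 1) (s, x)
        _ = deriv (fun z => QT (s, z)) x := ((VAF.hasDerivAt_slice_x (dQT (s, x))).deriv).symm
        _ = deriv (fun z => β s ^ k * (V0 (s, Q0 (s, z))) ^ k) x := by
              congr 1
              funext z
              exact hflow' s hs z
        _ = β s ^ k * ((k : ℝ) * (V0 (s, Q0 (s, x))) ^ (k - 1) * (V1 (s, Q0 (s, x)) * g s)) :=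
              hfull.deriv
        _ = A s * g s := by rw [hAdef]; ring
    have h := VAF.hasDerivAt_slice_t (dQ1 (s, x))
    rw [key] at h
    exact h
  -- continuity of A and the integrating factor
  have hinner : Continuous (fun s : ℝ => ((s : ℝ), Q0 (s, x))) :=
    continuous_id.prodMk (cQ0.continuous.comp (continuous_id.prodMk continuous_const))
  have hA : Continuous A := by
    rw [hAdef]
    exact ((continuous_const.mul (hβ.pow k)).mul
      ((cV0.continuous.comp hinner).pow (k - 1))).mul (cV1.continuous.comp hinner)
  set B : ℝ → ℝ := fun s => ∫ u in (0:ℝ)..s, A u with hBdef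
  have hB : ∀ s, HasDerivAt B (A s) s := fun s =>
    intervalIntegral.integral_hasDerivAt_right (hA.intervalIntegrable 0 s)
      (hA.stronglyMeasurableAtFilter _ _) hA.continuousAt
  -- `g` is the exponential of `B` on `[0, t]`
  have gexp : ∀ s ∈ Set.Icc (0:ℝ) t, g s = Real.exp (B s) := by
    have hder : ∀ s ∈ Set.Ico (0:ℝ) t,
        HasDerivWithinAt (fun u => g u * Real.exp (-B u)) 0 (Set.Ici s) s := by
      intro s hs
      have hsτ : s ∈ Set.Ico (0:ℝ) τ := ⟨hs.1, lt_trans hs.2 ht.2⟩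
      have hexp : HasDerivAt (fun u => Real.exp (-B u)) (Real.exp (-B s) * (-A s)) s :=
        ((hB s).neg).exp
      have h := (hgode s hsτ).mul hexp
      have h0 : A s * g s * Real.exp (-B s) + g s * (Real.exp (-B s) * (-A s)) = 0 := by ring
      rw [h0] at h
      exact h.hasDerivWithinAt
    have hcont : ContinuousOn (fun u => g u * Real.exp (-B u)) (Set.Icc 0 t) := by
      apply Continuous.continuousOn
      have hgc : Continuous g := cQ1.continuous.comp (continuous_id.prodMk continuous_const)
      have hBc : Continuous B := by
        rw [continuous_iff_continuousAt]
        exact fun s => (hB s).continuousAt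
      exact hgc.mul (Real.continuous_exp.comp hBc.neg)
    intro s hs
    have h := constant_of_has_deriv_right_zero hcont hder s hs
    have hB0 : B 0 = 0 := intervalIntegral.integral_same
    rw [hg0, hB0] at h
    simp only [neg_zero, Real.exp_zero, one_mul, mul_one] at h
    calc g s = g s * Real.exp (-B s) * Real.exp (B s) := by
          rw [mul_assoc, ← Real.exp_add]; simp
      _ = Real.exp (B s) := by rw [h, one_mul]
  have hgt_pos : 0 < g t := by
    rw [gexp t ⟨ht.1, le_refl t⟩]
    exact Real.exp_pos _
  -- the ODE for W
  set G : ℝ × ℝ → ℝ := fun p => V0 p - V2 p with hGdef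
  have dG : Differentiable ℝ G := dV0.sub dV2
  have hWode : ∀ s ∈ Set.Ico (0:ℝ) τ, HasDerivAt W (-(α * A s) * W s) s := by
    intro s hs
    have hr : HasDerivAt (fun u : ℝ => (u, Q0 (u, x))) ((1:ℝ), QT (s, x)) s :=
      (hasDerivAt_id s).prodMk (VAF.hasDerivAt_slice_t (dQ0 (s, x)))
    have hW : HasDerivAt W (fderiv ℝ G (s, Q0 (s, x)) (1, QT (s, x))) s :=
      (dG (s, Q0 (s, x))).hasFDerivAt.comp_hasDerivAt (l := G) s hr
    have hsub : ∀ (c : ℝ × ℝ) (p : ℝ × ℝ),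
        VAF.pd c G p = VAF.pd c V0 p - VAF.pd c V2 p := by
      intro c p
      show fderiv ℝ (fun z => V0 z - V2 z) p c = fderiv ℝ V0 p c - fderiv ℝ V2 p c
      rw [fderiv_fun_sub (dV0 p) (dV2 p)]
      rfl
    have hsplit : fderiv ℝ G (s, Q0 (s, x)) (1, QT (s, x))
        = VAF.pd (1, 0) G (s, Q0 (s, x)) + QT (s, x) * VAF.pd (0, 1) G (s, Q0 (s, x)) := by
      have h1 : ((1:ℝ), QT (s, x)) = ((1:ℝ), (0:ℝ)) + QT (s, x) • ((0:ℝ), (1:ℝ)) := by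
        simp
      rw [h1, map_add, map_smul, smul_eq_mul]
      rfl
    have hval : fderiv ℝ G (s, Q0 (s, x)) (1, QT (s, x)) = -(α * A s) * W s := by
      rw [hsplit, hsub, hsub, hflow' s hs x]
      have hp := hpde' s hs (Q0 (s, x))
      have hvk : (V0 (s, Q0 (s, x))) ^ k = (V0 (s, Q0 (s, x))) ^ (k - 1) * V0 (s, Q0 (s, x)) := by
        rw [← pow_succ]
        congr 1
        omega
      have hα : (k : ℝ) * α = (k : ℝ) + 1 := by
        rw [hαdef]; field_simp
      rw [hWdef]
      -- turn everything into a linear-algebra identity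
      have hVx : VAF.pd (0, 1) V0 (s, Q0 (s, x)) = V1 (s, Q0 (s, x)) := rfl
      have hVx3 : VAF.pd (0, 1) V2 (s, Q0 (s, x)) = V3 (s, Q0 (s, x)) := rfl
      rw [hVx, hVx3]
      have hT : VAF.pd (1, 0) V0 (s, Q0 (s, x)) - VAF.pd (1, 0) V2 (s, Q0 (s, x))
          = ((k : ℝ) + 1) * β s ^ k * (V0 (s, Q0 (s, x))) ^ (k - 1) * V1 (s, Q0 (s, x)) * V2 (s, Q0 (s, x))
            + β s ^ k * (V0 (s, Q0 (s, x))) ^ k * V3 (s, Q0 (s, x))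
            - ((k : ℝ) + 2) * β s ^ k * (V0 (s, Q0 (s, x))) ^ k * V1 (s, Q0 (s, x)) := by
        linarith [hp]
      -- abbreviate
      set a := V0 (s, Q0 (s, x))
      set b := V1 (s, Q0 (s, x))
      set c2 := V2 (s, Q0 (s, x))
      set c3 := V3 (s, Q0 (s, x))
      have hT' : VAF.pd (1, 0) V0 (s, Q0 (s, x)) - VAF.pd (1, 0) V2 (s, Q0 (s, x))
          = ((k : ℝ) + 1) * β s ^ k * a ^ (k - 1) * b * c2
            + β s ^ k * a ^ k * c3
            - ((k : ℝ) + 2) * β s ^ k * a ^ k * b := by linarith [hT]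
      rw [hT', hAdef]
      rw [hvk]
      have : -(α * ((k : ℝ) * β s ^ k * a ^ (k - 1) * b)) * (a - c2)
          = -(((k:ℝ) * α) * β s ^ k * a ^ (k - 1) * b) * (a - c2) := by ring
      rw [this, hα]
      ring
    rw [hval] at hW
    exact hW
  -- the conserved quantity
  set Φ : ℝ → ℝ := fun s => W s * g s ^ α with hΦdef
  have hΦder : ∀ s ∈ Set.Icc (0:ℝ) t, HasDerivAt Φ 0 s := by
    intro s hs
    have hsτ : s ∈ Set.Ico (0:ℝ) τ := ⟨hs.1, lt_of_le_of_lt hs.2 ht.2⟩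
    have hgpos : 0 < g s := by
      rw [gexp s hs]; exact Real.exp_pos _
    have hgne : g s ≠ 0 := ne_of_gt hgpos
    have hrg : HasDerivAt (fun u => g u ^ α) (A s * g s * α * g s ^ (α - 1)) s :=
      (hgode s hsτ).rpow_const (Or.inl hgne)
    have h := (hWode s hsτ).mul hrg
    have h0 : -(α * A s) * W s * g s ^ α + W s * (A s * g s * α * g s ^ (α - 1)) = 0 := by
      rw [Real.rpow_sub_one hgne]
      field_simp
      ring
    rw [h0] at h
    exact h
  have hΦconst : Φ t = Φ 0 := by
    have hcont : ContinuousOn Φ (Set.Icc 0 t) := fun s hs =>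
      (hΦder s hs).continuousAt.continuousWithinAt
    have hder : ∀ s ∈ Set.Ico (0:ℝ) t, HasDerivWithinAt Φ 0 (Set.Ici s) s := fun s hs =>
      (hΦder s ⟨hs.1, le_of_lt hs.2⟩).hasDerivWithinAt
    exact constant_of_has_deriv_right_zero hcont hder t ⟨ht.1, le_refl t⟩
  have hΦ0 : Φ 0 = v 0 x - V2 (0, x) := by
    rw [hΦdef]
    simp only [hg0, hW0, Real.one_rpow, mul_one]
  -- finish: part 1
  have main : (v t (q t x) - dX (dX v) t (q t x)) * (dX q t x) ^ α = v 0 x - dX (dX v) 0 x := by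
    rw [F2 t (q t x), F6 t x, F2 0 x]
    have h1 : v t (q t x) - V2 (t, q t x) = W t := by rw [hWdef]
    have h2 : Q1 (t, x) = g t := rfl
    rw [h1, h2]
    exact hΦconst.trans hΦ0
  refine ⟨main, ?_⟩
  intro _
  have hgα : 0 < g t ^ α := Real.rpow_pos_of_pos hgt_pos α
  have hWt : v t (q t x) - dX (dX v) t (q t x) = W t := by
    rw [F2 t (q t x), hWdef]
  rw [hWt, ← main, hWt]
  have hgq : dX q t x = g t := F6 t x
  rw [hgq]
  rcases lt_trichotomy (W t) 0 with hneg | hzero | hpos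
  · rw [Real.sign_of_neg hneg, Real.sign_of_neg (mul_neg_of_neg_of_pos hneg hgα)]
  · rw [hzero, zero_mul]
  · rw [Real.sign_of_pos hpos, Real.sign_of_pos (mul_pos hpos hgα)]
end

section
/- Let v ∈ C²(T) and V = v - v_{xx}. If V(x) > 0 for all x ∈ T, then -v(x) ≤ v_x(x) ≤ v(x) for all x ∈ T (in particular v > 0 and |v_x| ≤ v); if V(x) < 0 for all x, then v(x) ≤ v_x(x) ≤ -v(x) for all x. In either case ‖v_x‖_{L^∞} ≤ ‖v‖_{L^∞}. -/
open Real

/-!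
With `V = v - v''`, the functions `w = v - v'` and `z = v + v'` satisfy `w' + w = V` and
`z - z' = V`. A periodic `u` with `u' + u > 0` is positive: `eˣ u` is strictly increasing, so
`eˣ u(x) < eˣ⁺ᵀ u(x + T) = eᵀ eˣ u(x)`. Reflecting `x ↦ -x` handles `u - u' > 0`. Hence `V > 0`
gives `v ∓ v' > 0`, i.e. `|v'| < v`; the case `V < 0` is this applied to `-v`.
-/

namespace Function.Periodic

variable {u : ℝ → ℝ} {T : ℝ}

theorem pos_of_deriv_add_pos (hT : 0 < T) (hper : Periodic u T) (hu : Differentiable ℝ u)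
    (h : ∀ x, 0 < deriv u x + u x) (x : ℝ) : 0 < u x := by
  have hg : ∀ y, HasDerivAt (fun y => exp y * u y) (exp y * (deriv u y + u y)) y := fun y =>
    ((hasDerivAt_exp y).mul (hu y).hasDerivAt).congr_deriv (by ring)
  have hmono : StrictMono fun y => exp y * u y :=
    strictMono_of_deriv_pos fun y => (hg y).deriv ▸ mul_pos (exp_pos y) (h y)
  have hlt := hmono (lt_add_of_pos_right x hT)
  simp only [hper x, exp_add] at hlt
  have hpos : 0 < exp x * (exp T - 1) * u x := by linarith
  exact pos_of_mul_pos_right hpos (mul_pos (exp_pos x) (sub_pos.mpr (one_lt_exp_iff.mpr hT))).le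

theorem pos_of_sub_deriv_pos (hT : 0 < T) (hper : Periodic u T) (hu : Differentiable ℝ u)
    (h : ∀ x, 0 < u x - deriv u x) (x : ℝ) : 0 < u x := by
  have hper' : Periodic (fun y => u (-y)) T := fun y => by
    simp only [neg_add, ← sub_eq_add_neg, hper.sub_eq]
  have hu' : Differentiable ℝ fun y => u (-y) := hu.comp differentiable_neg
  simpa using hper'.pos_of_deriv_add_pos hT hu'
    (fun y => by simpa [deriv_comp_neg, add_comm, ← sub_eq_add_neg] using h (-y)) (-x)

end Function.Periodic

theorem Function.Periodic.deriv {𝕜 F : Type*} [NontriviallyNormedField 𝕜] [NormedAddCommGroup F]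
    [NormedSpace 𝕜 F] {f : 𝕜 → F} {c : 𝕜} (hf : Function.Periodic f c) :
    Function.Periodic (deriv f) c := fun x => by
  rw [← deriv_comp_add_const, funext hf]

theorem abs_deriv_lt_of_sub_deriv_deriv_pos {v : ℝ → ℝ} {T : ℝ} (hT : 0 < T)
    (hper : Function.Periodic v T) (hv : Differentiable ℝ v) (hv' : Differentiable ℝ (deriv v))
    (hV : ∀ x, 0 < v x - deriv (deriv v) x) (x : ℝ) : |deriv v x| < v x := by
  have hsub : 0 < v x - deriv v x :=
    (hper.sub hper.deriv).pos_of_deriv_add_pos hT (hv.sub hv') (fun y => by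
      rw [deriv_sub (hv y) (hv' y)]; simp only [Pi.sub_apply]; linarith [hV y]) x
  have hadd : 0 < v x + deriv v x :=
    (hper.add hper.deriv).pos_of_sub_deriv_pos hT (hv.add hv') (fun y => by
      rw [deriv_add (hv y) (hv' y)]; simp only [Pi.add_apply]; linarith [hV y]) x
  exact abs_lt.mpr ⟨by linarith, by linarith⟩

theorem deriv_bounded_by_v (v : ℝ → ℝ) (hv : ContDiff ℝ 2 v)
    (hper : Function.Periodic v (2 * π)) :
    ((∀ x : ℝ, 0 < v x - deriv (deriv v) x) →
      ∀ x : ℝ, -v x ≤ deriv v x ∧ deriv v x ≤ v x) ∧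
    ((∀ x : ℝ, v x - deriv (deriv v) x < 0) →
      ∀ x : ℝ, v x ≤ deriv v x ∧ deriv v x ≤ -v x) ∧
    (((∀ x : ℝ, 0 < v x - deriv (deriv v) x) ∨
        (∀ x : ℝ, v x - deriv (deriv v) x < 0)) →
      (⨆ x : ℝ, |deriv v x|) ≤ ⨆ x : ℝ, |v x|) := by
  have hv1 : Differentiable ℝ v := hv.differentiable two_ne_zero
  have hv2 : Differentiable ℝ (deriv v) := hv.differentiable_deriv_two
  have hpos := abs_deriv_lt_of_sub_deriv_deriv_pos two_pi_pos hper hv1 hv2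
  have hneg (hV : ∀ x, v x - deriv (deriv v) x < 0) (x : ℝ) : |deriv v x| < -v x := by
    have hper' : Function.Periodic (-v) (2 * π) := fun y => neg_inj.mpr (hper y)
    simpa [deriv.neg'] using abs_deriv_lt_of_sub_deriv_deriv_pos two_pi_pos hper' hv1.neg
      (by simpa [deriv.neg'] using hv2.neg)
      (fun y => by simp only [Pi.neg_apply, deriv.neg', deriv.fun_neg]; linarith [hV y]) x
  refine ⟨fun hV x => abs_le.mp (hpos hV x).le, fun hV x => ?_, fun hV => ?_⟩
  · simpa using abs_le.mp (hneg hV x).le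
  · have hle : ∀ x, |deriv v x| ≤ |v x| := hV.elim
      (fun hV x => (hpos hV x).le.trans (le_abs_self _))
      (fun hV x => (hneg hV x).le.trans (neg_le_abs _))
    have hbdd : BddAbove (Set.range fun x => |v x|) :=
      ((hper.comp abs).isBounded_of_continuous two_pi_pos.ne' hv.continuous.abs).bddAbove
    exact ciSup_mono hbdd hle
end

section
/- Let k be odd, s > 3/2, and for n ∈ Z⁺ set u^{-1,n}(t,x) = -n^{-1/k} + n^{-s} cos(nx + t) and u^{1,n}(t,x) = n^{-1/k} + n^{-s} cos(nx - t). Then for every t ≥ 0 and n ≫ 1, ‖u^{-1,n}(t) - u^{1,n}(t)‖_{H^s} ≥ c ‖n^{-s} sin(nx)‖_{H^s} |sin t| - ‖2n^{-1/k}‖_{H^s} ≥ c' |sin t| - C n^{-1/k}, for constants c, c', C > 0 independent of n and t; in particular liminf_{n→∞} sup_{t∈[0,T]} ‖u^{-1,n}(t) - u^{1,n}(t)‖_{H^s} ≥ c' sup_{t∈[0,T]} |sin t| for every T > 0. -/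
open Real Complex Filter

lemma twoPiPos : (0:ℝ) < 2 * π := by positivity

/-- The `H^σ` norm of a sequence of Fourier coefficients. -/
noncomputable def seqHs (σ : ℝ) (a : ℤ → ℂ) : ℝ :=
  Real.sqrt (∑' k : ℤ, ((1:ℝ) + (k:ℝ)^2) ^ σ * ‖a k‖^2)

/-- The `H^σ(𝕋)` Sobolev norm of a `2π`-periodic function, via Fourier coefficients. -/
noncomputable def hsNorm (σ : ℝ) (f : ℝ → ℂ) : ℝ :=
  seqHs σ (fun k => fourierCoeffOn twoPiPos f k)

/-- `u^{-1,n}(t,·) - u^{1,n}(t,·)` where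
`u^{-1,n}(t,x) = -n^{-1/k} + n^{-s} cos(nx+t)` and
`u^{1,n}(t,x) = n^{-1/k} + n^{-s} cos(nx-t)`. -/
noncomputable def approxDiff (s : ℝ) (k n : ℕ) (t : ℝ) : ℝ → ℂ :=
  fun x => (((-(n:ℝ) ^ (-(1:ℝ)/(k:ℝ)) + (n:ℝ) ^ (-s) * Real.cos (n * x + t))
    - ((n:ℝ) ^ (-(1:ℝ)/(k:ℝ)) + (n:ℝ) ^ (-s) * Real.cos (n * x - t)) : ℝ) : ℂ)

/-!
By `cos (n x + t) - cos (n x - t) = -2 sin (n x) sin t`, the difference of the two approximate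
solutions is the trigonometric polynomial `-2 n^{-1/k} - 2 n^{-s} sin t · sin (n x)`, whose Fourier
coefficients live on the modes `0, ±n`. Its `H^s` norm is therefore explicit, and dropping the
constant mode bounds it below by `2 |sin t| ‖n^{-s} sin (n x)‖_{H^s}`. Since
`‖n^{-s} sin (n x)‖_{H^s}² = ((1 + n²) / n²)^s / 2` lies in `[1/2, 2^s/2]`, this lower bound is
uniform in `n`, and the same formula bounds all the norms above, so that the suprema over `t` and
the `liminf` over `n` are those of bounded families.
-/

open AddCircle

lemma fourierCoeffOn_comp_coe {E : Type*} [NormedAddCommGroup E] [NormedSpace ℂ E] {a b : ℝ}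
    (hab : a < b) [Fact (0 < b - a)] (g : AddCircle (b - a) → E) :
    fourierCoeffOn hab (fun x => g x) = fourierCoeff g := by
  ext n
  unfold fourierCoeffOn
  congr
  ext x
  simp [liftIoc]

lemma fourierCoeff_const_mul_fourier_add {T : ℝ} [Fact (0 < T)] (c d e : ℂ) (i j l : ℤ) :
    fourierCoeff (T := T) (fun y => c * fourier i y + d * fourier j y + e * fourier l y) =
      Pi.single i c + Pi.single j d + Pi.single l e := by
  have hint : ∀ (c : ℂ) (i : ℤ), MeasureTheory.Integrable (fun y : AddCircle T => c * fourier i y)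
      haarAddCircle := fun c i =>
    (continuous_const.mul (fourier i).continuous).integrable_of_hasCompactSupport
      (.of_compactSpace _)
  change fourierCoeff ((fun y => c * fourier i y) + (fun y => d * fourier j y) +
    (fun y => e * fourier l y)) = _
  rw [fourierCoeff.add ((hint c i).add (hint d j)) (hint e l),
    fourierCoeff.add (hint c i) (hint d j)]
  ext m
  simp only [Pi.add_apply, fourierCoeff.const_mul, fourierCoeff_fourier, Pi.single_apply]
  split_ifs <;> simp

lemma fourierCoeffOn_const_add_mul_sin (A B : ℝ) (n : ℕ) :
    fourierCoeffOn twoPiPos (fun x => ((A + B * Real.sin (n * x) : ℝ) : ℂ)) =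
      Pi.single 0 (A : ℂ) + Pi.single (n : ℤ) (-B * I / 2) + Pi.single (-n : ℤ) (B * I / 2) := by
  have : Fact (0 < 2 * π - 0) := ⟨by linarith [twoPiPos]⟩
  rw [← fourierCoeff_const_mul_fourier_add (T := 2 * π - 0), ← fourierCoeffOn_comp_coe twoPiPos]
  congr 1
  ext x
  simp only [fourier_coe_apply]
  have hx : ∀ m : ℤ, 2 * π * I * m * x / ((2 * π - 0 : ℝ) : ℂ) = m * x * I := by
    intro m
    have : (π : ℂ) ≠ 0 := by exact_mod_cast Real.pi_ne_zero
    push_cast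
    rw [sub_zero]
    field_simp
  simp only [hx]
  push_cast
  simp only [Complex.sin, zero_mul, Complex.exp_zero, neg_mul]
  ring

lemma hsNorm_nonneg (σ : ℝ) (f : ℝ → ℂ) : 0 ≤ hsNorm σ f := Real.sqrt_nonneg _

lemma hsNorm_const_add_mul_sin (σ A B : ℝ) {n : ℕ} (hn : n ≠ 0) :
    hsNorm σ (fun x => ((A + B * Real.sin (n * x) : ℝ) : ℂ)) =
      √(A ^ 2 + B ^ 2 * ((1 + (n : ℝ) ^ 2) ^ σ / 2)) := by
  have hn' : (n : ℤ) ≠ 0 := by exact_mod_cast hn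
  rw [hsNorm, fourierCoeffOn_const_add_mul_sin, seqHs,
    tsum_eq_sum (s := {0, (n : ℤ), -(n : ℤ)}),
    Finset.sum_insert (by simp only [Finset.mem_insert, Finset.mem_singleton]; omega),
    Finset.sum_pair (by omega)]
  · congr 1
    simp only [Int.cast_zero, ne_eq, OfNat.ofNat_ne_zero, not_false_eq_true, zero_pow, add_zero,
      one_rpow, neg_mul, Pi.add_apply, Pi.single_eq_same, hn'.symm, Pi.single_eq_of_ne, zero_eq_neg,
      Int.natCast_eq_zero, hn, norm_real, norm_eq_abs, sq_abs, one_mul, Int.cast_natCast, zero_add,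
      Nat.cast_eq_neg_cast, and_self, Complex.norm_div, norm_neg, Complex.norm_mul, norm_I, mul_one,
      Complex.norm_ofNat, div_pow, Int.cast_neg, even_two, Even.neg_pow, neg_eq_zero,
      Nat.neg_cast_eq_cast, add_right_inj]
    ring
  · intro m hm
    simp only [Finset.mem_insert, Finset.mem_singleton, not_or] at hm
    simp [hm.1, hm.2.1, hm.2.2]

lemma hsNorm_mul_sin (σ B : ℝ) {n : ℕ} (hn : n ≠ 0) :
    hsNorm σ (fun x => ((B * Real.sin (n * x) : ℝ) : ℂ)) = |B| * √((1 + (n : ℝ) ^ 2) ^ σ / 2) := by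
  simpa [Real.sqrt_mul (sq_nonneg B), Real.sqrt_sq_eq_abs] using hsNorm_const_add_mul_sin σ 0 B hn

lemma hsNorm_mul_sin_le_hsNorm_const_add_mul_sin (σ A B : ℝ) {n : ℕ} (hn : n ≠ 0) :
    hsNorm σ (fun x => ((B * Real.sin (n * x) : ℝ) : ℂ)) ≤
      hsNorm σ (fun x => ((A + B * Real.sin (n * x) : ℝ) : ℂ)) := by
  have h0 := hsNorm_const_add_mul_sin σ 0 B hn
  simp only [zero_add] at h0
  rw [h0, hsNorm_const_add_mul_sin σ A B hn]
  exact Real.sqrt_le_sqrt (by linarith [sq_nonneg A])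

lemma one_add_sq_rpow_mul_rpow_neg_sq {x : ℝ} (hx : 0 < x) (s : ℝ) :
    (1 + x ^ 2) ^ s * (x ^ (-s)) ^ 2 = ((1 + x ^ 2) / x ^ 2) ^ s := by
  rw [Real.rpow_pow_comm hx.le, Real.rpow_neg (by positivity), ← div_eq_mul_inv,
    Real.div_rpow (by positivity) (by positivity)]

lemma one_le_one_add_sq_rpow_mul_rpow_neg_sq {x : ℝ} (hx : 0 < x) {s : ℝ} (hs : 0 ≤ s) :
    1 ≤ (1 + x ^ 2) ^ s * (x ^ (-s)) ^ 2 := by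
  rw [one_add_sq_rpow_mul_rpow_neg_sq hx]
  exact Real.one_le_rpow ((one_le_div (by positivity)).2 (by linarith)) hs

lemma one_add_sq_rpow_mul_rpow_neg_sq_le {x : ℝ} (hx : 1 ≤ x) {s : ℝ} (hs : 0 ≤ s) :
    (1 + x ^ 2) ^ s * (x ^ (-s)) ^ 2 ≤ 2 ^ s := by
  rw [one_add_sq_rpow_mul_rpow_neg_sq (by linarith)]
  exact Real.rpow_le_rpow (by positivity) ((div_le_iff₀ (by positivity)).2 (by nlinarith)) hs

lemma approxDiff_eq (s : ℝ) (k n : ℕ) (t : ℝ) :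
    approxDiff s k n t = fun x => ((-(2 * (n : ℝ) ^ (-(1 : ℝ) / k)) +
      (-2 * (n : ℝ) ^ (-s) * Real.sin t) * Real.sin (n * x) : ℝ) : ℂ) := by
  ext x
  rw [approxDiff, Real.cos_add, Real.cos_sub]
  push_cast
  ring

lemma half_le_hsNorm_rpow_neg_mul_sin {s : ℝ} (hs : 0 ≤ s) {n : ℕ} (hn : n ≠ 0) :
    1 / 2 ≤ hsNorm s (fun x => (((n : ℝ) ^ (-s) * Real.sin (n * x) : ℝ) : ℂ)) := by
  have hn' : (0 : ℝ) < n := by positivity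
  have hweight := one_le_one_add_sq_rpow_mul_rpow_neg_sq hn' hs
  rw [hsNorm_mul_sin s _ hn, ← pow_le_pow_iff_left₀ (by norm_num) (by positivity) two_ne_zero,
    mul_pow, sq_abs, Real.sq_sqrt (by positivity)]
  linarith

lemma two_mul_hsNorm_mul_sin_le_hsNorm_approxDiff (s : ℝ) (k : ℕ) {n : ℕ} (hn : n ≠ 0) (t : ℝ) :
    2 * hsNorm s (fun x => (((n : ℝ) ^ (-s) * Real.sin (n * x) : ℝ) : ℂ)) * |Real.sin t| ≤
      hsNorm s (approxDiff s k n t) := by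
  rw [approxDiff_eq]
  refine le_of_eq_of_le ?_ (hsNorm_mul_sin_le_hsNorm_const_add_mul_sin s _ _ hn)
  rw [hsNorm_mul_sin s _ hn, hsNorm_mul_sin s _ hn, abs_mul, abs_mul, abs_neg, abs_two]
  ring

lemma abs_sin_le_hsNorm_approxDiff {s : ℝ} (hs : 0 ≤ s) (k : ℕ) {n : ℕ} (hn : n ≠ 0) (t : ℝ) :
    |Real.sin t| ≤ hsNorm s (approxDiff s k n t) :=
  calc |Real.sin t| = 2 * (1 / 2) * |Real.sin t| := by ring
    _ ≤ 2 * hsNorm s (fun x => (((n : ℝ) ^ (-s) * Real.sin (n * x) : ℝ) : ℂ)) * |Real.sin t| := by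
      gcongr
      exact half_le_hsNorm_rpow_neg_mul_sin hs hn
    _ ≤ hsNorm s (approxDiff s k n t) := two_mul_hsNorm_mul_sin_le_hsNorm_approxDiff s k hn t

lemma hsNorm_approxDiff_le {s : ℝ} (hs : 0 ≤ s) (k : ℕ) {n : ℕ} (hn : n ≠ 0) (t : ℝ) :
    hsNorm s (approxDiff s k n t) ≤ √(4 + 2 * 2 ^ s) := by
  have hn' : (1 : ℝ) ≤ n := by exact_mod_cast Nat.one_le_iff_ne_zero.2 hn
  have hconst : (n : ℝ) ^ (-(1 : ℝ) / k) ≤ 1 :=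
    Real.rpow_le_one_of_one_le_of_nonpos hn'
      (div_nonpos_of_nonpos_of_nonneg (by norm_num) k.cast_nonneg)
  have hweight := one_add_sq_rpow_mul_rpow_neg_sq_le hn' hs
  have hsin : Real.sin t ^ 2 ≤ 1 := Real.sin_sq_le_one t
  rw [approxDiff_eq, hsNorm_const_add_mul_sin s _ _ hn]
  apply Real.sqrt_le_sqrt
  nlinarith [mul_le_mul hsin hweight (by positivity) zero_le_one,
    pow_le_one₀ (by positivity) hconst (n := 2)]

namespace Real

variable {α : Type*} {S : Set α} {f g : α → ℝ}

lemma biSup_le {a : ℝ} (h : ∀ t ∈ S, f t ≤ a) (ha : 0 ≤ a) : ⨆ t ∈ S, f t ≤ a :=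
  Real.iSup_le (fun t => Real.iSup_le (h t) ha) ha

/-- In `ℝ` an empty supremum is `0`, hence the nonnegativity of `g`. -/
lemma biSup_mono {K : ℝ} (hfg : ∀ t ∈ S, f t ≤ g t) (hg₀ : ∀ t ∈ S, 0 ≤ g t)
    (hgK : ∀ t ∈ S, g t ≤ K) : ⨆ t ∈ S, f t ≤ ⨆ t ∈ S, g t := by
  have hbdd : BddAbove (Set.range fun t => ⨆ _ : t ∈ S, g t) := by
    refine ⟨max K 0, ?_⟩
    rintro _ ⟨t, rfl⟩
    exact Real.iSup_le (fun ht => (hgK t ht).trans (le_max_left _ _)) (le_max_right _ _)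
  have hg_le : ∀ t ∈ S, g t ≤ ⨆ t ∈ S, g t := fun t ht =>
    le_ciSup_of_le hbdd t (ciSup_pos (f := fun _ => g t) ht).ge
  have hsup₀ : 0 ≤ ⨆ t ∈ S, g t := Real.iSup_nonneg fun t => Real.iSup_nonneg (hg₀ t)
  exact biSup_le (fun t ht => (hfg t ht).trans (hg_le t ht)) hsup₀

end Real

theorem approxSol_nonuniform_dependence_general (k : ℕ) (s : ℝ) (hs : 3/2 < s) :
    ∃ c c' C : ℝ, 0 < c ∧ 0 < c' ∧ 0 < C ∧ ∃ N : ℕ,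
      (∀ n : ℕ, N ≤ n → ∀ t : ℝ, 0 ≤ t →
        (hsNorm s (approxDiff s k n t) ≥
          c * hsNorm s (fun x => (((n:ℝ) ^ (-s) * Real.sin (n * x) : ℝ) : ℂ)) *
            |Real.sin t|
          - hsNorm s (fun _ => ((2 * (n:ℝ) ^ (-(1:ℝ)/(k:ℝ)) : ℝ) : ℂ))) ∧
        hsNorm s (approxDiff s k n t) ≥
          c' * |Real.sin t| - C * (n:ℝ) ^ (-(1:ℝ)/(k:ℝ))) ∧
      (∀ T : ℝ, 0 < T →
        c' * (⨆ t ∈ Set.Icc (0:ℝ) T, |Real.sin t|) ≤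
          liminf (fun n : ℕ => ⨆ t ∈ Set.Icc (0:ℝ) T, hsNorm s (approxDiff s k n t))
            atTop) := by
  have hs₀ : 0 ≤ s := by linarith
  refine ⟨2, 1, 1, two_pos, one_pos, one_pos, 1, fun n hn t _ => ?_, fun T _ => ?_⟩
  · have hn₀ : n ≠ 0 := Nat.one_le_iff_ne_zero.1 hn
    constructor
    · linarith [two_mul_hsNorm_mul_sin_le_hsNorm_approxDiff s k hn₀ t,
        hsNorm_nonneg s (fun _ => ((2 * (n : ℝ) ^ (-(1 : ℝ) / k) : ℝ) : ℂ))]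
    · linarith [abs_sin_le_hsNorm_approxDiff hs₀ k hn₀ t,
        Real.rpow_nonneg (Nat.cast_nonneg n) (-(1 : ℝ) / k)]
  · rw [one_mul]
    apply le_liminf_of_le
    · refine isCoboundedUnder_ge_of_eventually_le atTop (x := √(4 + 2 * 2 ^ s)) ?_
      filter_upwards [eventually_ne_atTop 0] with n hn
      exact Real.biSup_le (fun t _ => hsNorm_approxDiff_le hs₀ k hn t) (Real.sqrt_nonneg _)
    · filter_upwards [eventually_ne_atTop 0] with n hn
      exact Real.biSup_mono (fun t _ => abs_sin_le_hsNorm_approxDiff hs₀ k hn t)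
        (fun t _ => hsNorm_nonneg _ _) (fun t _ => hsNorm_approxDiff_le hs₀ k hn t)

theorem approxSol_nonuniform_dependence (k : ℕ) (hk : Odd k) (s : ℝ) (hs : 3/2 < s) :
    ∃ c c' C : ℝ, 0 < c ∧ 0 < c' ∧ 0 < C ∧ ∃ N : ℕ,
      (∀ n : ℕ, N ≤ n → ∀ t : ℝ, 0 ≤ t →
        (hsNorm s (approxDiff s k n t) ≥
          c * hsNorm s (fun x => (((n:ℝ) ^ (-s) * Real.sin (n * x) : ℝ) : ℂ)) *
            |Real.sin t|
          - hsNorm s (fun _ => ((2 * (n:ℝ) ^ (-(1:ℝ)/(k:ℝ)) : ℝ) : ℂ))) ∧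
        hsNorm s (approxDiff s k n t) ≥
          c' * |Real.sin t| - C * (n:ℝ) ^ (-(1:ℝ)/(k:ℝ))) ∧
      (∀ T : ℝ, 0 < T →
        c' * (⨆ t ∈ Set.Icc (0:ℝ) T, |Real.sin t|) ≤
          liminf (fun n : ℕ => ⨆ t ∈ Set.Icc (0:ℝ) T, hsNorm s (approxDiff s k n t))
            atTop) :=
  approxSol_nonuniform_dependence_general k s hs
end
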